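/- arXiv:1607.06647 — 8 statements merged into one kernel-verified Lean document; each statement's English description precedes it below -/
import Mathlib

section
/- Every invertible n×n matrix over a field E can be written as a product of two invertible symmetric n×n matrices over E. -/
/-!
A square matrix `a` over a field is similar to its transpose through a symmetric invertible
matrix `u`, i.e. `aᵀ * u = u * a`; then `a = (a * u⁻¹) * u` with `a * u⁻¹` symmetric.

To find `u`, make `Kⁿ` a `K[X]`-module through `a`. It is a finite direct sum of cyclic modules
`K[X] ⧸ (q)` with `q` monic, and on each of them `(x, y) ↦ coeff (x * y mod q) (deg q - 1)` is a
nondegenerate symmetric form for which multiplication by `X` is self-adjoint. The orthogonal sum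
of these forms, transported to `Kⁿ`, has Gram matrix `u`.
-/

open Polynomial LinearMap Matrix

section InvariantForm

variable (K R M : Type*) [CommRing K] [CommRing R] [Algebra K R] [AddCommGroup M] [Module K M]
  [Module R M] [IsScalarTower K R M]

def HasInvariantSymmForm : Prop :=
  ∃ B : LinearMap.BilinForm K M,
    B.IsSymm ∧ B.SeparatingLeft ∧ ∀ (r : R) (x y : M), B (r • x) y = B x (r • y)

variable {K R M}

theorem HasInvariantSymmForm.of_linearEquiv {N : Type*} [AddCommGroup N] [Module K N]
    [Module R N] [IsScalarTower K R N] (h : HasInvariantSymmForm K R M) (e : M ≃ₗ[R] N) :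
    HasInvariantSymmForm K R N := by
  obtain ⟨B, hsymm, hsep, hinv⟩ := h
  let e' : N →ₗ[K] M := (e.symm.restrictScalars K).toLinearMap
  refine ⟨B.compl₁₂ e' e', ⟨fun x y => hsymm.eq _ _⟩, fun x hx => ?_, fun r x y => ?_⟩
  · exact e.symm.map_eq_zero_iff.mp (hsep _ fun y => by simpa [e'] using hx (e y))
  · simpa [e'] using hinv r (e.symm x) (e.symm y)

theorem HasInvariantSymmForm.pi {ι : Type*} [Fintype ι] [DecidableEq ι] {M : ι → Type*}
    [∀ i, AddCommGroup (M i)] [∀ i, Module K (M i)] [∀ i, Module R (M i)]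
    [∀ i, IsScalarTower K R (M i)] (h : ∀ i, HasInvariantSymmForm K R (M i)) :
    HasInvariantSymmForm K R (∀ i, M i) := by
  choose B hsymm hsep hinv using h
  refine ⟨∑ i, (B i).compl₁₂ (proj i) (proj i), ⟨fun x y => ?_⟩,
    fun x hx => funext fun i => hsep i (x i) fun y => ?_, fun r x y => ?_⟩
  · simp [(hsymm _).eq (x _)]
  · have hxi := hx (Pi.single i y)
    simp only [coe_sum, Finset.sum_apply, compl₁₂_apply, coe_proj, Function.eval] at hxi
    rwa [Finset.sum_eq_single i (fun j _ hj => by simp [hj]) (by simp), Pi.single_eq_same] at hxi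
  · simp [hinv]

theorem hasInvariantSymmForm_of_functional {A : Type*} [CommRing A] [Algebra K A] [Algebra R A]
    [IsScalarTower K R A] (φ : A →ₗ[K] K) (hφ : ∀ x ≠ 0, ∃ y, φ (x * y) ≠ 0) :
    HasInvariantSymmForm K R A := by
  refine ⟨(mul K A).compr₂ φ, ⟨fun x y => by simp [mul_comm]⟩, fun x hx => ?_,
    fun r x y => by simp⟩
  by_contra hx0
  obtain ⟨y, hy⟩ := hφ x hx0
  exact hy (hx y)

end InvariantForm

section CyclicModule

variable {K : Type*} [CommRing K] [Nontrivial K] {q : K[X]}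

theorem AdjoinRoot.exists_coeff_modByMonicHom_mul_ne_zero (hq : q.Monic) {x : AdjoinRoot q}
    (hx : x ≠ 0) : ∃ y, (modByMonicHom hq (x * y)).coeff (q.natDegree - 1) ≠ 0 := by
  obtain ⟨z, hxz, hzq⟩ : ∃ z, x = mk q z ∧ z.degree < q.degree :=
    ⟨modByMonicHom hq x, (mk_leftInverse hq x).symm, by
      obtain ⟨x, rfl⟩ := mk_surjective x; exact degree_modByMonic_lt x hq⟩
  have hz : z ≠ 0 := by rintro rfl; exact hx (by rw [hxz, map_zero])
  have hk : z.natDegree < q.natDegree := natDegree_lt_natDegree hz hzq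
  -- multiplying by `X ^ m` moves the leading coefficient of `z` to degree `deg q - 1`
  set m := q.natDegree - 1 - z.natDegree
  have hdeg : (z * X ^ m).degree < q.degree := by
    rw [degree_mul_X_pow, degree_eq_natDegree hz, degree_eq_natDegree hq.ne_zero]
    exact_mod_cast (by omega : z.natDegree + m < q.natDegree)
  refine ⟨mk q (X ^ m), ?_⟩
  rw [hxz, ← map_mul, modByMonicHom_mk, (modByMonic_eq_self_iff hq).mpr hdeg,
    show q.natDegree - 1 = z.natDegree + m by omega, coeff_mul_X_pow]
  exact leadingCoeff_ne_zero.mpr hz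

theorem hasInvariantSymmForm_quotient_span_monic (hq : q.Monic) :
    HasInvariantSymmForm K K[X] (K[X] ⧸ Ideal.span {q}) :=
  hasInvariantSymmForm_of_functional
    ((lcoeff K (q.natDegree - 1)).comp (AdjoinRoot.modByMonicHom hq))
    fun _ hx => AdjoinRoot.exists_coeff_modByMonicHom_mul_ne_zero hq hx

end CyclicModule

theorem hasInvariantSymmForm_quotient_span_singleton {K : Type*} [Field K] {p : K[X]}
    (hp : p ≠ 0) : HasInvariantSymmForm K K[X] (K[X] ⧸ K[X] ∙ p) := by
  classical
  exact (hasInvariantSymmForm_quotient_span_monic (monic_normalize hp)).of_linearEquiv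
    (Submodule.quotEquivOfEq _ _
      (Ideal.span_singleton_eq_span_singleton.mpr (associated_normalize p).symm))

theorem hasInvariantSymmForm_of_isTorsion {K M : Type*} [Field K] [AddCommGroup M] [Module K M]
    [Module K[X] M] [IsScalarTower K K[X] M] [Module.Finite K[X] M]
    (hM : Module.IsTorsion K[X] M) : HasInvariantSymmForm K K[X] M := by
  classical
  obtain ⟨ι, _, p, hp, e, ⟨g⟩⟩ := Module.equiv_directSum_of_isTorsion hM
  exact (HasInvariantSymmForm.pi fun i =>
    hasInvariantSymmForm_quotient_span_singleton (pow_ne_zero (e i) (hp i).ne_zero)).of_linearEquiv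
      ((DirectSum.linearEquivFunOnFintype K[X] ι _).symm ≪≫ₗ g.symm)

theorem LinearMap.exists_isSymm_separatingLeft_isSelfAdjoint {K V : Type*} [Field K]
    [AddCommGroup V] [Module K V] [FiniteDimensional K V] (f : V →ₗ[K] V) :
    ∃ B : LinearMap.BilinForm K V, B.IsSymm ∧ B.SeparatingLeft ∧ B.IsSelfAdjoint f := by
  obtain ⟨B, hsymm, hsep, hinv⟩ :=
    hasInvariantSymmForm_of_isTorsion (Module.AEval.isTorsion_of_finiteDimensional K V f)
  let e := Module.AEval'.of f
  refine ⟨B.compl₁₂ e.toLinearMap e.toLinearMap, ⟨fun x y => hsymm.eq _ _⟩, fun x hx => ?_,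
    fun x y => ?_⟩
  · exact e.map_eq_zero_iff.mp (hsep _ fun y => by simpa [e] using hx (e.symm y))
  · simpa [e, Module.AEval'.X_smul_of] using hinv X (e x) (e y)

namespace Matrix

variable {K n : Type*} [Field K] [Fintype n] [DecidableEq n]

theorem exists_isSymm_isUnit_transpose_mul_eq (a : Matrix n n K) :
    ∃ u : Matrix n n K, u.IsSymm ∧ IsUnit u ∧ aᵀ * u = u * a := by
  obtain ⟨B, hsymm, hsep, hadj⟩ := (toLin' a).exists_isSymm_separatingLeft_isSelfAdjoint
  refine ⟨toMatrix₂' K B, BilinForm.isSymm_toMatrix'_iff_isSymm.mpr hsymm, ?_, ?_⟩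
  · rw [isUnit_iff_isUnit_det, isUnit_iff_ne_zero, ← separatingLeft_iff_det_ne_zero]
    exact separatingLeft_toMatrix₂'_iff.mpr hsep
  · rw [← IsAdjointPair, ← isAdjointPair_toLinearMap₂', toLinearMap₂'_toMatrix']
    exact hadj

theorem IsSymm.mul_inv_of_transpose_mul_eq {a u : Matrix n n K} (hu : u.IsSymm)
    (hu' : IsUnit u) (h : aᵀ * u = u * a) : (a * u⁻¹).IsSymm := by
  have hdet : IsUnit u.det := (isUnit_iff_isUnit_det u).mp hu'
  rw [IsSymm, transpose_mul, transpose_nonsing_inv, hu.eq]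
  calc u⁻¹ * aᵀ = u⁻¹ * (aᵀ * u) * u⁻¹ := by
        rw [← Matrix.mul_assoc, Matrix.mul_assoc _ u, mul_nonsing_inv _ hdet, Matrix.mul_one]
    _ = a * u⁻¹ := by rw [h, ← Matrix.mul_assoc, nonsing_inv_mul _ hdet, Matrix.one_mul]

end Matrix

theorem stmt_0_general {E : Type*} [Field E] {n : ℕ}
    (a : Matrix (Fin n) (Fin n) E) (ha : IsUnit a) :
    ∃ d₁ d₂ : Matrix (Fin n) (Fin n) E,
      IsUnit d₁ ∧ IsUnit d₂ ∧ d₁.IsSymm ∧ d₂.IsSymm ∧ a = d₁ * d₂ := by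
  obtain ⟨u, hsymm, hunit, hcomm⟩ := a.exists_isSymm_isUnit_transpose_mul_eq
  refine ⟨a * u⁻¹, u, ha.mul (isUnit_nonsing_inv_iff.mpr hunit), hunit,
    hsymm.mul_inv_of_transpose_mul_eq hunit hcomm, hsymm, ?_⟩
  rw [mul_assoc, nonsing_inv_mul _ ((isUnit_iff_isUnit_det u).mp hunit), mul_one]

/-- Every invertible n×n matrix over a field `E` is a product of two
invertible symmetric matrices. -/
theorem stmt_0 {E : Type*} [Field E] {n : ℕ} (hn : 0 < n)
    (a : Matrix (Fin n) (Fin n) E) (ha : IsUnit a) :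
    ∃ d₁ d₂ : Matrix (Fin n) (Fin n) E,
      IsUnit d₁ ∧ IsUnit d₂ ∧ d₁.IsSymm ∧ d₂.IsSymm ∧ a = d₁ * d₂ :=
  stmt_0_general a ha
end

section
/- Every square matrix over a field is conjugate to its transpose by an invertible symmetric matrix. -/
/-!
View `a` as an endomorphism `f` of `Eⁿ`. Through `f`, `Eⁿ` is a finitely generated torsion
`E[X]`-module, hence a direct sum of cyclic modules `E[X] ⧸ (q)`. On `E[X] ⧸ (m)`, `m` monic,
let `φ` read off the coefficient of `X ^ (deg m - 1)` of the remainder mod `m`; then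
`(x, y) ↦ φ (x * y)` is a nondegenerate form, it is symmetric, and multiplication by `X` is
self-adjoint for it because the algebra is commutative. Transporting the sum of these forms to
`Eⁿ` gives a nondegenerate symmetric form `B` for which `f` is self-adjoint. Its Gram matrix `J`
is symmetric, invertible and satisfies `aᵀ * J = J * a`, so `d = J⁻¹` works.
-/

open Polynomial LinearMap Matrix
open LinearMap (BilinForm)

section FrobeniusForm

variable {R A : Type*} [CommSemiring R] [CommSemiring A] [Algebra R A]

def frobeniusForm (φ : A →ₗ[R] R) : BilinForm R A := (LinearMap.mul R A).compr₂ φ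

@[simp]
theorem frobeniusForm_apply (φ : A →ₗ[R] R) (x y : A) :
    frobeniusForm φ x y = φ (x * y) :=
  rfl

theorem isSymm_frobeniusForm (φ : A →ₗ[R] R) : (frobeniusForm φ).IsSymm :=
  ⟨fun x y => by rw [frobeniusForm_apply, frobeniusForm_apply, mul_comm]⟩

theorem isAdjointPair_frobeniusForm_mulLeft (φ : A →ₗ[R] R) (a : A) :
    IsAdjointPair (frobeniusForm φ) (frobeniusForm φ) (LinearMap.mulLeft R a)
      (LinearMap.mulLeft R a) := fun x y => by
  simp only [frobeniusForm_apply, LinearMap.mulLeft_apply, mul_left_comm, mul_assoc]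

theorem separatingLeft_frobeniusForm_pi {ι : Type*} [Fintype ι] {A : ι → Type*}
    [∀ i, CommSemiring (A i)] [∀ i, Algebra R (A i)] (φ : ∀ i, A i →ₗ[R] R)
    (hφ : ∀ i, (frobeniusForm (φ i)).SeparatingLeft) :
    (frobeniusForm (∑ i, φ i ∘ₗ LinearMap.proj i)).SeparatingLeft := by
  classical
  intro x hx
  funext i
  refine hφ i (x i) fun w => ?_
  have := hx (Pi.single i w)
  rw [frobeniusForm_apply, ← Pi.single_mul_right, LinearMap.sum_apply,
    Finset.sum_eq_single i (fun j _ hj => by simp [hj]) (by simp)] at this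
  simpa using this

end FrobeniusForm

theorem AdjoinRoot.separatingLeft_frobeniusForm_lcoeff_modByMonicHom {R : Type*} [CommRing R]
    [Nontrivial R] {m : R[X]} (hm : m.Monic) :
    (frobeniusForm (lcoeff R (m.natDegree - 1) ∘ₗ modByMonicHom hm)).SeparatingLeft := by
  intro x hx
  obtain ⟨s, hs, rfl⟩ : ∃ s : R[X], s.degree < m.degree ∧ mk m s = x := by
    obtain ⟨r, rfl⟩ := mk_surjective x
    refine ⟨r %ₘ m, degree_modByMonic_lt r hm, ?_⟩
    rw [← modByMonicHom_mk hm, mk_leftInverse hm]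
  by_contra hs0
  replace hs0 : s ≠ 0 := fun h => hs0 (by rw [h, map_zero])
  have hsm : s.natDegree < m.natDegree := natDegree_lt_natDegree hs0 hs
  obtain ⟨k, hk⟩ : ∃ k, s.natDegree + k = m.natDegree - 1 :=
    ⟨_, Nat.add_sub_of_le (by omega)⟩
  have hreduced : (s * X ^ k) %ₘ m = s * X ^ k := by
    rw [modByMonic_eq_self_iff hm]
    refine degree_le_natDegree.trans_lt ?_
    rw [degree_eq_natDegree hm.ne_zero, natDegree_mul_X_pow _ hs0]
    exact_mod_cast (show s.natDegree + k < m.natDegree by omega)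
  apply leadingCoeff_ne_zero.mpr hs0
  have := hx (mk m (X ^ k))
  rwa [frobeniusForm_apply, ← map_mul, LinearMap.comp_apply, modByMonicHom_mk, hreduced,
    lcoeff_apply, ← hk, coeff_mul_X_pow] at this

theorem Polynomial.exists_separatingLeft_frobeniusForm_quotient {K : Type*} [Field K]
    {I : Ideal K[X]} (hI : I ≠ ⊥) :
    ∃ φ : K[X] ⧸ I →ₗ[K] K, (frobeniusForm φ).SeparatingLeft := by
  classical
  obtain ⟨g, rfl⟩ := (IsPrincipalIdealRing.principal I).principal
  rw [Ideal.submodule_span_eq] at hI ⊢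
  have hg : g ≠ 0 := fun h => hI (by rw [h, Ideal.span_singleton_eq_bot])
  rw [← Ideal.span_singleton_eq_span_singleton.mpr (normalize_associated g)]
  exact ⟨_, AdjoinRoot.separatingLeft_frobeniusForm_lcoeff_modByMonicHom (monic_normalize hg)⟩

theorem LinearMap.BilinForm.exists_isSymm_separatingLeft_isAdjointPair_of_linearEquiv
    {R M N : Type*} [CommSemiring R] [AddCommMonoid M] [Module R M] [AddCommMonoid N]
    [Module R N] (B : BilinForm R N) (hB : B.IsSymm) (hB' : B.SeparatingLeft)
    {g : Module.End R N} (hg : IsAdjointPair B B g g) (ψ : M ≃ₗ[R] N) {f : Module.End R M}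
    (hψ : ∀ x, ψ (f x) = g (ψ x)) :
    ∃ B : BilinForm R M, B.IsSymm ∧ B.SeparatingLeft ∧ IsAdjointPair B B f f := by
  refine ⟨B.compl₁₂ ψ.toLinearMap ψ.toLinearMap, ⟨fun x y => hB.eq _ _⟩, fun x hx => ?_,
    fun x y => ?_⟩
  · refine ψ.map_eq_zero_iff.mp (hB' _ fun y => ?_)
    simpa using hx (ψ.symm y)
  · simpa [hψ] using hg (ψ x) (ψ y)

theorem Module.End.exists_isSymm_separatingLeft_isAdjointPair {K M : Type*} [Field K]
    [AddCommGroup M] [Module K M] [FiniteDimensional K M] (f : Module.End K M) :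
    ∃ B : BilinForm K M, B.IsSymm ∧ B.SeparatingLeft ∧ IsAdjointPair B B f f := by
  obtain ⟨ι, _, p, hp, e, ⟨decomp⟩⟩ :=
    Module.equiv_directSum_of_isTorsion (Module.AEval.isTorsion_of_finiteDimensional K M f)
  choose φ hφ using fun i => exists_separatingLeft_frobeniusForm_quotient
    (I := K[X] ∙ p i ^ e i) (by simpa using pow_ne_zero (e i) (hp i).ne_zero)
  let ψ : M ≃ₗ[K] Π i, K[X] ⧸ K[X] ∙ p i ^ e i := (Module.AEval'.of f).trans
    ((decomp.trans (DirectSum.linearEquivFunOnFintype _ _ _)).restrictScalars K)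
  have hψ : ∀ x, ψ (f x) = LinearMap.mulLeft K (algebraMap K[X] _ X) (ψ x) := fun x => by
    rw [LinearMap.mulLeft_apply, ← Algebra.smul_def]
    simp only [ψ, LinearEquiv.trans_apply, LinearEquiv.restrictScalars_apply,
      ← Module.AEval'.X_smul_of, map_smul]
  exact LinearMap.BilinForm.exists_isSymm_separatingLeft_isAdjointPair_of_linearEquiv _
    (isSymm_frobeniusForm _) (separatingLeft_frobeniusForm_pi φ hφ)
    (isAdjointPair_frobeniusForm_mulLeft _ _) ψ hψ

theorem Matrix.exists_isSymm_isUnit_transpose_mul_eq_mul {K ι : Type*} [Field K] [Fintype ι]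
    [DecidableEq ι] (a : Matrix ι ι K) :
    ∃ J : Matrix ι ι K, J.IsSymm ∧ IsUnit J ∧ aᵀ * J = J * a := by
  obtain ⟨B, hsymm, hsep, hadj⟩ :=
    Module.End.exists_isSymm_separatingLeft_isAdjointPair (toLin' a)
  refine ⟨B.toMatrix', B.isSymm_toMatrix'_iff_isSymm.mpr hsymm, ?_, ?_⟩
  · rw [isUnit_iff_isUnit_det, isUnit_iff_ne_zero, ← Matrix.separatingLeft_iff_det_ne_zero]
    exact separatingLeft_toMatrix₂'_iff.mpr hsep
  · refine (isAdjointPair_toLinearMap₂' _ _ a a).mp ?_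
    rwa [LinearMap.BilinForm.toMatrix', Matrix.toLinearMap₂'_toMatrix']

/-- Every square matrix over a field is conjugate to its transpose by an
invertible symmetric matrix. -/
theorem stmt_1 {E : Type*} [Field E] {n : ℕ} (a : Matrix (Fin n) (Fin n) E) :
    ∃ d : Matrix (Fin n) (Fin n) E,
      IsUnit d ∧ d.IsSymm ∧ d⁻¹ * a * d = aᵀ := by
  obtain ⟨J, hsymm, hunit, hJ⟩ := a.exists_isSymm_isUnit_transpose_mul_eq_mul
  have hdet : IsUnit J.det := (isUnit_iff_isUnit_det J).mp hunit
  refine ⟨J⁻¹, isUnit_nonsing_inv_iff.mpr hunit, hsymm.inv, ?_⟩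
  rw [nonsing_inv_nonsing_inv J hdet, ← hJ]
  exact mul_nonsing_inv_cancel_right _ _ hdet
end

section
/- Every unitary complex n×n matrix g can be conjugated to its transpose by a symmetric unitary matrix: there exists s ∈ U(n) with sᵀ = s and s g s⁻¹ = gᵀ. -/
/-!
A unitary matrix `g` is normal, so its commuting Hermitian real and imaginary parts have a common
orthonormal eigenbasis, which gives `g = u D u*` with `u` unitary and `D` diagonal. Transposing,
`gᵀ = ū D uᵀ`, hence `s = ū u*` satisfies `s g s* = gᵀ`; it is unitary, and `sᵀ = (u*)ᵀ ūᵀ = ū u*`.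
-/

open Matrix Module.End

namespace LinearMap.IsSymmetric

variable {𝕜 E : Type*} [RCLike 𝕜] [NormedAddCommGroup E] [InnerProductSpace 𝕜 E]
  [FiniteDimensional 𝕜 E]

theorem exists_orthonormalBasis_eigenvectors_of_commute {n : ℕ}
    (hn : Module.finrank 𝕜 E = n) {A B : E →ₗ[𝕜] E} (hA : A.IsSymmetric) (hB : B.IsSymmetric)
    (hAB : Commute A B) :
    ∃ (b : OrthonormalBasis (Fin n) 𝕜 E) (α β : Fin n → 𝕜),
      ∀ i, A (b i) = α i • b i ∧ B (b i) = β i • b i := by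
  classical
  let V : 𝕜 × 𝕜 → Submodule 𝕜 E := fun μ => eigenspace A μ.2 ⊓ eigenspace B μ.1
  have hV : DirectSum.IsInternal V := directSum_isInternal_of_commute hA hB hAB
  have hV' : DirectSum.IsInternal fun μ : {μ // V μ ≠ ⊥} => V μ :=
    DirectSum.isInternal_ne_bot_iff.2 hV
  have : Fintype {μ // V μ ≠ ⊥} := hV.submodule_iSupIndep.fintypeNeBotOfFiniteDimensional
  have hOrth : OrthogonalFamily 𝕜 (fun μ : {μ // V μ ≠ ⊥} => V μ) fun μ => (V μ).subtypeₗᵢ :=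
    fun μ ν hμν => orthogonalFamily_eigenspace_inf_eigenspace hA hB (Subtype.coe_injective.ne hμν)
  let μ i := (hV'.subordinateOrthonormalBasisIndex hn i hOrth).1
  refine ⟨hV'.subordinateOrthonormalBasis hn hOrth, fun i => (μ i).2, fun i => (μ i).1,
    fun i => ?_⟩
  obtain ⟨hAi, hBi⟩ := hV'.subordinateOrthonormalBasis_subordinate hn i hOrth
  exact ⟨mem_eigenspace_iff.1 hAi, mem_eigenspace_iff.1 hBi⟩

end LinearMap.IsSymmetric

namespace Matrix

section RCLike

variable {𝕜 ι : Type*} [RCLike 𝕜] [Fintype ι] [DecidableEq ι]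

theorem exists_unitary_eq_mul_diagonal_mul_star_of_orthonormalBasis
    {A : Matrix ι ι 𝕜} (b : OrthonormalBasis ι 𝕜 (EuclideanSpace 𝕜 ι)) (d : ι → 𝕜)
    (hb : ∀ j, A *ᵥ b j = d j • b j) :
    ∃ u ∈ unitaryGroup ι 𝕜, A = u * diagonal d * star u := by
  set u := (EuclideanSpace.basisFun ι 𝕜).toBasis.toMatrix b.toBasis
  have hu : u ∈ unitaryGroup ι 𝕜 :=
    (EuclideanSpace.basisFun ι 𝕜).toMatrix_orthonormalBasis_mem_unitary b
  have hAu : A * u = u * diagonal d := by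
    ext i j
    rw [mul_diagonal, mul_comm]
    exact congr_fun (hb j) i
  refine ⟨u, hu, ?_⟩
  rw [← hAu, Matrix.mul_assoc, mem_unitaryGroup_iff.1 hu, Matrix.mul_one]

open Complex ComplexStarModule in
theorem exists_unitary_eq_mul_diagonal_mul_star_of_isStarNormal {n : ℕ}
    (A : Matrix (Fin n) (Fin n) ℂ) [IsStarNormal A] :
    ∃ u ∈ unitaryGroup (Fin n) ℂ, ∃ d, A = u * diagonal d * star u := by
  have hsymm {B : Matrix (Fin n) (Fin n) ℂ} (hB : IsSelfAdjoint B) :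
      (toEuclideanLin B).IsSymmetric :=
    isSymmetric_toEuclideanLin_iff.2 hB
  obtain ⟨b, α, β, hb⟩ :=
    LinearMap.IsSymmetric.exists_orthonormalBasis_eigenvectors_of_commute
      finrank_euclideanSpace_fin (hsymm (ℜ A).2) (hsymm (ℑ A).2)
      ((Commute.realPart_imaginaryPart A).map (toLpLinAlgEquiv 2))
  have hAb (j) : A *ᵥ b j = (α j + I * β j) • b j := by
    have hα := congr_arg WithLp.ofLp (hb j).1
    have hβ := congr_arg WithLp.ofLp (hb j).2
    simp only [ofLp_toLpLin, toLin'_apply, WithLp.ofLp_smul] at hα hβ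
    conv_lhs => rw [← realPart_add_I_smul_imaginaryPart A]
    rw [add_mulVec, smul_mulVec, hα, hβ, smul_smul, add_smul]
  obtain ⟨u, hu, hAu⟩ := exists_unitary_eq_mul_diagonal_mul_star_of_orthonormalBasis b _ hAb
  exact ⟨u, hu, _, hAu⟩

end RCLike

section CommRing

variable {R ι : Type*} [CommRing R] [StarRing R] [Fintype ι] [DecidableEq ι]

theorem exists_symmetric_unitary_mul_mul_star_eq_transpose {A u : Matrix ι ι R} {d : ι → R}
    (hu : u ∈ unitaryGroup ι R) (hA : A = u * diagonal d * star u) :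
    ∃ s ∈ unitaryGroup ι R, sᵀ = s ∧ s * A * star s = Aᵀ := by
  have hu₁ : star u * u = 1 := hu.1
  have hstar : star ((star u)ᵀ * star u) = u * uᵀ := by
    rw [star_mul, star_star, star_eq_conjTranspose (star u)ᵀ,
      conjTranspose_transpose_eq_transpose_conjTranspose, ← star_eq_conjTranspose, star_star]
  refine ⟨(star u)ᵀ * star u, ?_, by rw [transpose_mul, transpose_transpose], ?_⟩
  · exact mul_mem (transpose_mem_unitaryGroup_iff.2 (Unitary.star_mem hu)) (Unitary.star_mem hu)
  · rw [hstar, hA]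
    calc (star u)ᵀ * star u * (u * diagonal d * star u) * (u * uᵀ)
        = (star u)ᵀ * (star u * u) * diagonal d * (star u * u) * uᵀ := by
          simp only [Matrix.mul_assoc]
      _ = (u * diagonal d * star u)ᵀ := by
          rw [hu₁, Matrix.mul_one, Matrix.mul_one, transpose_mul, transpose_mul,
            diagonal_transpose, Matrix.mul_assoc]

end CommRing

end Matrix

/-- Every complex unitary matrix `g` is conjugated to its transpose by a
symmetric unitary matrix. -/
theorem stmt_4 {n : ℕ} (g : Matrix (Fin n) (Fin n) ℂ)
    (hg : g ∈ Matrix.unitaryGroup (Fin n) ℂ) :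
    ∃ s : Matrix (Fin n) (Fin n) ℂ,
      s ∈ Matrix.unitaryGroup (Fin n) ℂ ∧ sᵀ = s ∧ s * g * s⁻¹ = gᵀ := by
  have : IsStarNormal g := isStarNormal_of_mem_unitary hg
  obtain ⟨u, hu, d, hgu⟩ := exists_unitary_eq_mul_diagonal_mul_star_of_isStarNormal g
  obtain ⟨s, hs, hsymm, hsg⟩ := exists_symmetric_unitary_mul_mul_star_eq_transpose hu hgu
  exact ⟨s, hs, hsymm, by rwa [inv_eq_left_inv hs.1]⟩
end

section
/- Let A be a commutative local ring whose ideals form a finite chain A ⊋ 𝔭 ⊋ 𝔭² ⊋ … ⊋ 𝔭^e = {0} (e.g. A = E[T]/(p^e) with p irreducible). Let V be an A-module with a sesquilinear pairing ⟨·,·⟩ (relative to an involution τ of A satisfying ⟨v, a w⟩ = ⟨τ(a) v, w⟩), and let v ∈ V with ann_A(v) = 0. Then the restriction of ⟨·,·⟩ to the cyclic submodule Av is nondegenerate if and only if ⟨𝔭^{e-1} v, v⟩ ≠ {0}. -/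
/-!
Moving scalars across the pairing, `B (c • v) (b • v) = B ((τ b * c) • v) v`, so `b • v` lies in the
radical of `A v` iff `a ↦ B (a • v) v` vanishes on the principal ideal `(τ b)`. As `ann_A(v) = 0` and
`τ` is bijective, nondegeneracy means that this function vanishes on no nonzero principal ideal.
In a ring whose ideals are the powers `𝔭^k` with `𝔭^e = 0 ≠ 𝔭^(e-1)`, every nonzero ideal contains
`𝔭^(e-1)`, and the condition reduces to the function not vanishing on `𝔭^(e-1)`.
-/

open Submodule

theorem Ideal.pow_pred_le_of_ne_bot {A : Type*} [CommSemiring A] {𝔭 : Ideal A} {e : ℕ}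
    (hideals : ∀ I : Ideal A, ∃ k : ℕ, I = 𝔭 ^ k) (hnil : 𝔭 ^ e = ⊥)
    {I : Ideal A} (hI : I ≠ ⊥) : 𝔭 ^ (e - 1) ≤ I := by
  obtain ⟨k, rfl⟩ := hideals I
  have hk : k < e := by
    by_contra! hek
    exact hI (le_bot_iff.mp (hnil ▸ Ideal.pow_le_pow_right hek))
  exact Ideal.pow_le_pow_right (by omega)

theorem forall_ne_zero_exists_mul_ne_zero_iff {A M : Type*} [CommSemiring A] [Zero M]
    {S : Ideal A} (hS : S ≠ ⊥) (hmin : ∀ I : Ideal A, I ≠ ⊥ → S ≤ I) (f : A → M) :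
    (∀ x : A, x ≠ 0 → ∃ c, f (x * c) ≠ 0) ↔ ∃ a ∈ S, f a ≠ 0 := by
  constructor
  · intro h
    obtain ⟨x, hxS, hx⟩ := (Submodule.ne_bot_iff S).mp hS
    obtain ⟨c, hc⟩ := h x hx
    exact ⟨x * c, S.mul_mem_right c hxS, hc⟩
  · rintro ⟨a, haS, ha⟩ x hx
    have hxI : Ideal.span {x} ≠ ⊥ := by simpa using hx
    obtain ⟨c, rfl⟩ := Ideal.mem_span_singleton'.mp (hmin _ hxI haS)
    exact ⟨c, by rwa [mul_comm]⟩

theorem nondegenerate_span_singleton_iff {A V M : Type*} [CommRing A] [AddCommGroup V]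
    [Module A V] [Zero M] (τ : A ≃+* A) (B : V → V → M)
    (hadj : ∀ (a : A) (v w : V), B v (a • w) = B (τ a • v) w)
    {v : V} (hv : ∀ a : A, a • v = 0 → a = 0) :
    (∀ w ∈ span A {v}, (∀ u ∈ span A {v}, B u w = 0) → w = 0) ↔
      ∀ x : A, x ≠ 0 → ∃ c, B ((x * c) • v) v ≠ 0 := by
  have hmove (b c : A) : B (c • v) (b • v) = B ((τ b * c) • v) v := by
    rw [hadj, smul_smul]
  have hsmul_eq_zero (b : A) : b • v = 0 ↔ τ b = 0 := by
    rw [map_eq_zero_iff τ τ.injective]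
    exact ⟨hv b, fun hb => hb ▸ zero_smul A v⟩
  calc (∀ w ∈ span A {v}, (∀ u ∈ span A {v}, B u w = 0) → w = 0)
      ↔ ∀ b : A, (∀ c : A, B (c • v) (b • v) = 0) → b • v = 0 := by
        simp only [mem_span_singleton, forall_exists_index, forall_apply_eq_imp_iff]
    _ ↔ ∀ b : A, (∀ c : A, B ((τ b * c) • v) v = 0) → τ b = 0 := by
        simp only [hmove, hsmul_eq_zero]
    _ ↔ ∀ x : A, (∀ c : A, B ((x * c) • v) v = 0) → x = 0 :=
        (τ.surjective.forall (p := fun x => (∀ c : A, B ((x * c) • v) v = 0) → x = 0)).symm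
    _ ↔ ∀ x : A, x ≠ 0 → ∃ c, B ((x * c) • v) v ≠ 0 := by
        simp only [← not_forall, not_imp_not]

theorem stmt_5_general {E A V : Type*} [Field E] [CommRing A] [AddCommGroup V] [Module A V]
    (τ : A ≃+* A)
    (𝔭 : Ideal A) (e : ℕ) (he : 0 < e)
    (hideals : ∀ I : Ideal A, ∃ k : ℕ, I = 𝔭 ^ k)
    (hchain : ∀ k : ℕ, k < e → 𝔭 ^ (k + 1) < 𝔭 ^ k)
    (hnil : 𝔭 ^ e = ⊥)
    (B : V → V → E)
    (hadj : ∀ (a : A) (v w : V), B v (a • w) = B (τ a • v) w)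
    (v : V) (hv : ∀ a : A, a • v = 0 → a = 0) :
    (∀ w ∈ Submodule.span A ({v} : Set V),
        (∀ u ∈ Submodule.span A ({v} : Set V), B u w = 0) → w = 0)
      ↔ ∃ a ∈ 𝔭 ^ (e - 1), B (a • v) v ≠ 0 := by
  have hsocle : 𝔭 ^ (e - 1) ≠ ⊥ := by
    have := (hchain (e - 1) (by omega)).ne'
    rwa [Nat.sub_add_cancel he, hnil] at this
  rw [nondegenerate_span_singleton_iff τ B hadj hv]
  exact forall_ne_zero_exists_mul_ne_zero_iff hsocle
    (fun _ => Ideal.pow_pred_le_of_ne_bot hideals hnil) (fun a => B (a • v) v)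

/-- Nondegeneracy criterion for a cyclic submodule.  `A` is a commutative local
ring whose ideals form the finite chain `A ⊋ 𝔭 ⊋ 𝔭² ⊋ ⋯ ⊋ 𝔭^e = 0`, `V` is an
`A`-module equipped with an `ε`-hermitian pairing `B` (valued in a field `E`,
with involution `σ` on `E`) satisfying the adjoint relation
`B v (a • w) = B (τ a • v) w` for an involution `τ` of `A` preserving `𝔭`.
If `v ∈ V` has trivial annihilator, then the restriction of `B` to the cyclic
submodule `A v` is nondegenerate iff `B (𝔭^{e-1} v) v ≠ 0`. -/
theorem stmt_5 {E A V : Type*} [Field E] [CommRing A] [AddCommGroup V] [Module A V]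
    (τ : A ≃+* A) (hτ : ∀ a, τ (τ a) = a)
    (𝔭 : Ideal A) (e : ℕ) (he : 0 < e)
    (hideals : ∀ I : Ideal A, ∃ k : ℕ, I = 𝔭 ^ k)
    (hchain : ∀ k : ℕ, k < e → 𝔭 ^ (k + 1) < 𝔭 ^ k)
    (hnil : 𝔭 ^ e = ⊥)
    (hτ𝔭 : ∀ a ∈ 𝔭, τ a ∈ 𝔭)
    (σ : E ≃+* E) (hσ : ∀ c, σ (σ c) = c) (ε : E) (hε : ε = 1 ∨ ε = -1)
    (B : V → V → E)
    (hB₁ : ∀ u v w, B (u + v) w = B u w + B v w)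
    (hB₂ : ∀ u v w, B u (v + w) = B u v + B u w)
    (hherm : ∀ v w, B w v = ε * σ (B v w))
    (hadj : ∀ (a : A) (v w : V), B v (a • w) = B (τ a • v) w)
    (v : V) (hv : ∀ a : A, a • v = 0 → a = 0) :
    (∀ w ∈ Submodule.span A ({v} : Set V),
        (∀ u ∈ Submodule.span A ({v} : Set V), B u w = 0) → w = 0)
      ↔ ∃ a ∈ 𝔭 ^ (e - 1), B (a • v) v ≠ 0 :=
  stmt_5_general τ 𝔭 e he hideals hchain hnil B hadj v hv
end

section
/- Let A = E[T]/(p^e) with maximal ideal 𝔭 and V an A-module with a compatible ε-hermitian form as above. Let x ∈ V with ann_A(x) = 0 and suppose Ax is degenerate; choose y ∈ V with ⟨p^{e-1} x, y⟩ ≠ 0. If Ax ∩ Ay ≠ {0}, then the cyclic submodule Ay is nondegenerate. -/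
/-!
Since the ideals of `A` form the chain `𝔭^k`, the ideal `{a | a • x ∈ A y}`, nonzero as
`A x ∩ A y ≠ 0`, contains `𝔭^(e-1)`; so `a₀ • x = d • y` for the `a₀ ∈ 𝔭^(e-1)` with
`⟨a₀ x, y⟩ ≠ 0`. If `b • y` is orthogonal to `A y`, then `d ∉ (b)`, since otherwise `⟨d y, y⟩`
would be a pairing of `A y` with `b • y`. By the chain, `b ∈ (d) 𝔭`, and `(d) 𝔭` kills `y`
because `𝔭 a₀ ⊆ 𝔭^e = 0`.
-/

namespace Ideal

variable {A : Type*} [CommRing A] {𝔭 : Ideal A}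

theorem mem_span_singleton_mul_of_notMem_span_singleton
    (hideals : ∀ I : Ideal A, ∃ k : ℕ, I = 𝔭 ^ k) {a b : A} (hab : a ∉ span {b}) :
    b ∈ span {a} * 𝔭 := by
  obtain ⟨t, ht⟩ := hideals (span {a})
  obtain ⟨s, hs⟩ := hideals (span {b})
  have hts : t < s := by
    by_contra! hst
    exact hab (hs ▸ pow_le_pow_right hst (ht ▸ mem_span_singleton_self a))
  rw [ht, ← pow_succ]
  exact pow_le_pow_right hts (hs ▸ mem_span_singleton_self b)

theorem pow_pred_le_of_ne_bot_s6 (hideals : ∀ I : Ideal A, ∃ k : ℕ, I = 𝔭 ^ k) {e : ℕ}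
    (hnil : 𝔭 ^ e = ⊥) {I : Ideal A} (hI : I ≠ ⊥) : 𝔭 ^ (e - 1) ≤ I := by
  obtain ⟨s, rfl⟩ := hideals I
  refine pow_le_pow_right ?_
  by_contra! hes
  exact hI (le_bot_iff.mp (hnil ▸ pow_le_pow_right (by omega)))

theorem mul_eq_zero_of_mem_pow_pred {e : ℕ} (hnil : 𝔭 ^ e = ⊥) {n a : A} (hn : n ∈ 𝔭)
    (ha : a ∈ 𝔭 ^ (e - 1)) : n * a = 0 := by
  have hmem : n * a ∈ 𝔭 ^ e :=
    pow_le_pow_right (Nat.le_add_of_sub_le le_rfl) (pow_succ' 𝔭 (e - 1) ▸ mul_mem_mul hn ha)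
  rwa [hnil, mem_bot] at hmem

end Ideal

section CyclicSubmodules

open Submodule

variable {A V : Type*} [CommRing A] [AddCommGroup V] [Module A V] {𝔭 : Ideal A} {e : ℕ}

theorem exists_smul_eq_smul_of_span_inf_ne_bot (hideals : ∀ I : Ideal A, ∃ k : ℕ, I = 𝔭 ^ k)
    (hnil : 𝔭 ^ e = ⊥) {x y : V} (hmeet : span A {x} ⊓ span A {y} ≠ ⊥) {a : A}
    (ha : a ∈ 𝔭 ^ (e - 1)) : ∃ d : A, d • y = a • x := by
  have hcolon : (span A {y}).colon {x} ≠ ⊥ := by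
    obtain ⟨v, hv, hv0⟩ := (Submodule.ne_bot_iff _).mp hmeet
    obtain ⟨c, rfl⟩ := mem_span_singleton.mp (mem_inf.mp hv).1
    refine (Submodule.ne_bot_iff _).mpr ⟨c, mem_colon_singleton.mpr (mem_inf.mp hv).2, ?_⟩
    rintro rfl
    exact hv0 (zero_smul A x)
  exact mem_span_singleton.mp
    (mem_colon_singleton.mp (Ideal.pow_pred_le_of_ne_bot_s6 hideals hnil hcolon ha))

theorem smul_eq_zero_of_mem_span_singleton_mul (hnil : 𝔭 ^ e = ⊥) {x y : V} {a d : A}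
    (ha : a ∈ 𝔭 ^ (e - 1)) (hd : d • y = a • x) {z : A} (hz : z ∈ Ideal.span {d} * 𝔭) :
    z • y = 0 := by
  obtain ⟨n, hn, rfl⟩ := Ideal.mem_span_singleton_mul.mp hz
  rw [mul_comm, mul_smul, hd, smul_smul, Ideal.mul_eq_zero_of_mem_pow_pred hnil hn ha,
    zero_smul]

theorem notMem_span_singleton_of_forall_pairing_eq_zero {E : Type*} [Zero E]
    (τ : A ≃+* A) (B : V → V → E) (hrefl : ∀ v w, B v w = 0 → B w v = 0)
    (hadj : ∀ (a : A) (v w : V), B v (a • w) = B (τ a • v) w) {y : V} {b d : A}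
    (hd : B (d • y) y ≠ 0) (hperp : ∀ u ∈ span A {y}, B u (b • y) = 0) :
    d ∉ Ideal.span {b} := by
  rintro hdb
  obtain ⟨r, rfl⟩ := Ideal.mem_span_singleton'.mp hdb
  have hpair : B (τ r • y) (b • y) = B y ((r * b) • y) := by
    rw [hadj, hadj, smul_smul, ← map_mul, mul_comm]
  exact hd (hrefl _ _ (hpair ▸ hperp _ (smul_mem _ _ (mem_span_singleton_self y))))

end CyclicSubmodules

theorem stmt_6_general {E A V : Type*} [Field E] [CommRing A] [AddCommGroup V] [Module A V]
    (τ : A ≃+* A)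
    (𝔭 : Ideal A) (e : ℕ)
    (hideals : ∀ I : Ideal A, ∃ k : ℕ, I = 𝔭 ^ k)
    (hnil : 𝔭 ^ e = ⊥)
    (σ : E ≃+* E) (ε : E)
    (B : V → V → E)
    (hherm : ∀ v w, B w v = ε * σ (B v w))
    (hadj : ∀ (a : A) (v w : V), B v (a • w) = B (τ a • v) w)
    (x : V)
    (y : V) (hy : ∃ a ∈ 𝔭 ^ (e - 1), B (a • x) y ≠ 0)
    (hmeet : Submodule.span A ({x} : Set V) ⊓ Submodule.span A ({y} : Set V) ≠ ⊥) :
    ∀ w ∈ Submodule.span A ({y} : Set V),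
      (∀ u ∈ Submodule.span A ({y} : Set V), B u w = 0) → w = 0 := by
  obtain ⟨a, ha, hax⟩ := hy
  obtain ⟨d, hd⟩ := exists_smul_eq_smul_of_span_inf_ne_bot hideals hnil hmeet ha
  have hrefl : ∀ v w, B v w = 0 → B w v = 0 := fun v w h => by
    rw [hherm, h, map_zero, mul_zero]
  intro w hw hperp
  obtain ⟨b, rfl⟩ := Submodule.mem_span_singleton.mp hw
  have hdb : d ∉ Ideal.span {b} :=
    notMem_span_singleton_of_forall_pairing_eq_zero τ B hrefl hadj (hd ▸ hax) hperp
  exact smul_eq_zero_of_mem_span_singleton_mul hnil ha hd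
    (Ideal.mem_span_singleton_mul_of_notMem_span_singleton hideals hdb)

/-- Setup as in the nondegeneracy criterion: `A` a commutative local ring whose
ideals form the chain `A ⊋ 𝔭 ⊋ ⋯ ⊋ 𝔭^e = 0`, `V` an `A`-module with an
`ε`-hermitian pairing `B` satisfying the adjoint relation with respect to an
involution `τ` of `A` preserving `𝔭`.  Let `x` have trivial annihilator and
suppose the cyclic submodule `A x` is degenerate; choose `y` with
`B (𝔭^{e-1} x) y ≠ 0`.  If `A x ∩ A y ≠ 0`, then `A y` is nondegenerate. -/
theorem stmt_6 {E A V : Type*} [Field E] [CommRing A] [AddCommGroup V] [Module A V]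
    (τ : A ≃+* A) (hτ : ∀ a, τ (τ a) = a)
    (𝔭 : Ideal A) (e : ℕ) (he : 0 < e)
    (hideals : ∀ I : Ideal A, ∃ k : ℕ, I = 𝔭 ^ k)
    (hchain : ∀ k : ℕ, k < e → 𝔭 ^ (k + 1) < 𝔭 ^ k)
    (hnil : 𝔭 ^ e = ⊥)
    (hτ𝔭 : ∀ a ∈ 𝔭, τ a ∈ 𝔭)
    (σ : E ≃+* E) (hσ : ∀ c, σ (σ c) = c) (ε : E) (hε : ε = 1 ∨ ε = -1)
    (B : V → V → E)
    (hB₁ : ∀ u v w, B (u + v) w = B u w + B v w)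
    (hB₂ : ∀ u v w, B u (v + w) = B u v + B u w)
    (hherm : ∀ v w, B w v = ε * σ (B v w))
    (hadj : ∀ (a : A) (v w : V), B v (a • w) = B (τ a • v) w)
    (x : V) (hx : ∀ a : A, a • x = 0 → a = 0)
    (hxdeg : ¬ (∀ w ∈ Submodule.span A ({x} : Set V),
        (∀ u ∈ Submodule.span A ({x} : Set V), B u w = 0) → w = 0))
    (y : V) (hy : ∃ a ∈ 𝔭 ^ (e - 1), B (a • x) y ≠ 0)
    (hmeet : Submodule.span A ({x} : Set V) ⊓ Submodule.span A ({y} : Set V) ≠ ⊥) :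
    ∀ w ∈ Submodule.span A ({y} : Set V),
      (∀ u ∈ Submodule.span A ({y} : Set V), B u w = 0) → w = 0 :=
  stmt_6_general τ 𝔭 e hideals hnil σ ε B hherm hadj x y hy hmeet
end

section
/- Let (V, ⟨·,·⟩) be a finite-dimensional vector space over E with a nondegenerate ε-hermitian form (relative to τ generating Gal(E/F), [E:F] ≤ 2), and let GU(V) be its similitude group with multiplier map μ. Fix an anti-unitary involution h ∈ Aut_F(V) (⟨hv, hv'⟩ = ⟨v', v⟩, h² = 1) and set ι(g) = μ(g)⁻¹ h g h⁻¹. Assume Theorem A: g = h₁ h₂ with h₁ anti-unitary, h₁² = 1, h₂ anti-unitary similitude with h₂² = μ(g). Then for every g ∈ GU(V), the elements ι(g) and g⁻¹ are conjugate by an element of U(V); explicitly (h₁ h) ι(g) (h₁ h)⁻¹ = g⁻¹. -/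
/-!
Write `g = h₁ h₂` as in Theorem A. Since `h₁² = 1` and `h₂² = β`, the inverse of `g` is
`β⁻¹ h₂ h₁`. On the other hand, as `h` is an involution commuting with the scalar `β⁻¹ = τ β⁻¹`,
conjugating `ι(g) = β⁻¹ h g h` by `h₁ h` gives `β⁻¹ h₁ g h₁ = β⁻¹ h₁ h₁ h₂ h₁ = β⁻¹ h₂ h₁` as well.
Finally `h₁ h` is unitary, being a product of two anti-unitary maps.
-/

theorem comp_isometry_of_swap {α R : Type*} {B : α → α → R} {a b : α → α}
    (ha : ∀ v w, B (a v) (a w) = B w v) (hb : ∀ v w, B (b v) (b w) = B w v) (v w : α) :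
    B (a (b v)) (a (b w)) = B v w := by
  rw [ha, hb]

section Semilinear

variable {E V : Type*} [Field E] [AddCommGroup V] [Module E V] {τ : E ≃+* E} {β : E}

theorem map_smul_of_fixed {f : V → V} (hf : ∀ (c : E) v, f (c • v) = τ c • f v)
    (hβτ : τ β = β) (v : V) : f (β • v) = β • f v := by
  rw [hf, hβτ]

theorem map_inv_smul_of_fixed {f : V → V} (hf : ∀ (c : E) v, f (c • v) = τ c • f v)
    (hβτ : τ β = β) (v : V) : f (β⁻¹ • v) = β⁻¹ • f v :=
  map_smul_of_fixed hf (by rw [map_inv₀, hβτ]) v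

variable {h₁ h₂ : V → V}

theorem symm_apply_eq_of_eq_comp (g : V ≃ₗ[E] V) (hβ0 : β ≠ 0) (hβτ : τ β = β)
    (h₁semi : ∀ (c : E) v, h₁ (c • v) = τ c • h₁ v) (h₁inv : ∀ v, h₁ (h₁ v) = v)
    (h₂sq : ∀ v, h₂ (h₂ v) = β • v) (hfact : ∀ v, g v = h₁ (h₂ v)) (v : V) :
    g.symm v = β⁻¹ • h₂ (h₁ v) := by
  rw [LinearEquiv.symm_apply_eq, map_smul, hfact, h₂sq, map_smul_of_fixed h₁semi hβτ, h₁inv,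
    inv_smul_smul₀ hβ0]

theorem conj_apply_eq_of_eq_comp {h g : V → V} (hβτ : τ β = β)
    (hhsemi : ∀ (c : E) v, h (c • v) = τ c • h v) (hhinv : ∀ v, h (h v) = v)
    (h₁semi : ∀ (c : E) v, h₁ (c • v) = τ c • h₁ v) (h₁inv : ∀ v, h₁ (h₁ v) = v)
    (hfact : ∀ v, g v = h₁ (h₂ v)) (v : V) :
    h₁ (h (β⁻¹ • h (g (h₁ v)))) = β⁻¹ • h₂ (h₁ v) := by
  rw [map_inv_smul_of_fixed hhsemi hβτ, hhinv, map_inv_smul_of_fixed h₁semi hβτ, hfact, h₁inv]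

end Semilinear

theorem stmt_11_general {E V : Type*} [Field E] [AddCommGroup V] [Module E V]
    (τ : E ≃+* E)
    (B : V → V → E)
    (g : V ≃ₗ[E] V) (β : E) (hβ0 : β ≠ 0) (hβτ : τ β = β)
    (h : V → V)
    (hhsemi : ∀ (c : E) (v : V), h (c • v) = τ c • h v)
    (hhinv : ∀ v, h (h v) = v)
    (hhanti : ∀ v w, B (h v) (h w) = B w v)
    (h₁ : V → V)
    (h₁semi : ∀ (c : E) (v : V), h₁ (c • v) = τ c • h₁ v)
    (h₁inv : ∀ v, h₁ (h₁ v) = v)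
    (h₁anti : ∀ v w, B (h₁ v) (h₁ w) = B w v)
    (h₂ : V → V)
    (h₂sq : ∀ v, h₂ (h₂ v) = β • v)
    (hfact : ∀ v, g v = h₁ (h₂ v)) :
    (∀ v w, B (h₁ (h v)) (h₁ (h w)) = B v w) ∧
    (∀ v, h₁ (h (β⁻¹ • h (g (h₁ v)))) = g.symm v) := by
  refine ⟨comp_isometry_of_swap h₁anti hhanti, fun v => ?_⟩
  rw [conj_apply_eq_of_eq_comp hβτ hhsemi hhinv h₁semi h₁inv hfact,
    symm_apply_eq_of_eq_comp g hβ0 hβτ h₁semi h₁inv h₂sq hfact]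

/-- Let `(V, B)` be a nondegenerate `ε`-hermitian space over `E` (with
involution `τ`), `g` a similitude with multiplier `β`, and `h` a fixed
anti-unitary involution; set `ι(g) = β⁻¹ • (h ∘ g ∘ h⁻¹)`.  Given Theorem A,
i.e. a factorization `g = h₁ ∘ h₂` with `h₁` an anti-unitary involution and
`h₂` an anti-unitary similitude with `h₂² = β`, the elements `ι(g)` and `g⁻¹`
are conjugate by the element `h₁ ∘ h` of `U(V)`:  `h₁ ∘ h` is an isometry and
`(h₁ h) ι(g) (h₁ h)⁻¹ = g⁻¹`. -/
theorem stmt_11 {E V : Type*} [Field E] [AddCommGroup V] [Module E V]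
    [FiniteDimensional E V]
    (τ : E ≃+* E) (hτ : ∀ c, τ (τ c) = c)
    (ε : E) (hε : ε = 1 ∨ ε = -1)
    (B : V → V → E)
    (hB₁ : ∀ u v w, B (u + v) w = B u w + B v w)
    (hBl : ∀ (c : E) (u w : V), B (c • u) w = c * B u w)
    (hherm : ∀ v w, B w v = ε * τ (B v w))
    (hnd : ∀ v : V, (∀ w : V, B v w = 0) → v = 0)
    (g : V ≃ₗ[E] V) (β : E) (hβ0 : β ≠ 0) (hβτ : τ β = β)
    (hg : ∀ v w, B (g v) (g w) = β * B v w)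
    (h : V → V)
    (hhadd : ∀ v w, h (v + w) = h v + h w)
    (hhsemi : ∀ (c : E) (v : V), h (c • v) = τ c • h v)
    (hhinv : ∀ v, h (h v) = v)
    (hhanti : ∀ v w, B (h v) (h w) = B w v)
    (h₁ : V → V)
    (h₁add : ∀ v w, h₁ (v + w) = h₁ v + h₁ w)
    (h₁semi : ∀ (c : E) (v : V), h₁ (c • v) = τ c • h₁ v)
    (h₁inv : ∀ v, h₁ (h₁ v) = v)
    (h₁anti : ∀ v w, B (h₁ v) (h₁ w) = B w v)
    (h₂ : V → V)
    (h₂add : ∀ v w, h₂ (v + w) = h₂ v + h₂ w)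
    (h₂semi : ∀ (c : E) (v : V), h₂ (c • v) = τ c • h₂ v)
    (h₂sq : ∀ v, h₂ (h₂ v) = β • v)
    (h₂anti : ∀ v w, B (h₂ v) (h₂ w) = β * B w v)
    (hfact : ∀ v, g v = h₁ (h₂ v)) :
    (∀ v w, B (h₁ (h v)) (h₁ (h w)) = B v w) ∧
    (∀ v, h₁ (h (β⁻¹ • h (g (h₁ v)))) = g.symm v) :=
  stmt_11_general τ B g β hβ0 hβτ h hhsemi hhinv hhanti h₁ h₁semi h₁inv h₁anti h₂ h₂sq hfact
end

section
/- For a non-archimedean local field F of residual characteristic p and residue field of cardinality q, an element x ∈ F× lies in 1 + 𝔭_F if and only if x admits an n-th root in F× for every positive integer n not divisible by p. -/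
/-!
If `p ∤ n` then `‖n‖ = 1`, so the Newton map `y ↦ y - (yⁿ - x) / n` is a contraction, with
constant `‖x - 1‖`, of the closed ball of that radius about `1`; its fixed point is an `n`-th root
of `x`.

Conversely, the value group is discrete, so an `x` with `n`-th roots for arbitrarily large `n`
has norm `1`. The subgroup `1 + 𝔭_F` is open in the compact group `𝔬_F×`, hence of finite
index `N`; writing `N = pᵃ m` with `p ∤ m`, every unit satisfies `u ^ (pᵃ m) ∈ 1 + 𝔭_F`, and since
`p`-th powers are injective on the residue field, `uᵐ ∈ 1 + 𝔭_F`. Now `x = yᵐ` for a unit `y`.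
-/

open Metric IsUltrametricDist Filter

lemma norm_sub_le_max {E : Type*} [SeminormedAddGroup E] [IsUltrametricDist E] (a b : E) :
    ‖a - b‖ ≤ max ‖a‖ ‖b‖ := by
  simpa [sub_eq_add_neg] using norm_add_le_max a (-b)

lemma Nat.frequently_atTop_not_dvd {p : ℕ} (hp : p ≠ 1) : ∃ᶠ n in atTop, ¬ p ∣ n := by
  refine frequently_atTop.2 fun N => ?_
  by_cases hN : p ∣ N
  · exact ⟨N + 1, N.le_succ, fun h => hp (Nat.dvd_one.1 ((Nat.dvd_add_right hN).1 h))⟩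
  · exact ⟨N, le_rfl, hN⟩

section NormedField

variable {F : Type*} [NormedField F] [IsUltrametricDist F]

lemma norm_natCast_eq_one_of_not_dvd {p : ℕ} (hp : p.Prime) (hpF : ‖(p : F)‖ < 1) {n : ℕ}
    (hn : ¬ p ∣ n) : ‖(n : F)‖ = 1 := by
  refine (norm_natCast_le_one F n).antisymm (not_lt.mp fun hlt => ?_)
  obtain ⟨a, b, hab⟩ := Nat.isCoprime_iff_coprime.mpr ((hp.coprime_iff_not_dvd.mpr hn).symm)
  have hsum : (a : F) * n + (b : F) * p = 1 := by exact_mod_cast congrArg (Int.cast : ℤ → F) hab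
  have hsmall : ∀ (k : ℤ) (m : ℕ), ‖(m : F)‖ < 1 → ‖(k : F) * m‖ < 1 := fun k m hm => by
    rw [norm_mul]
    exact mul_lt_one_of_nonneg_of_lt_one_right (norm_intCast_le_one F k) (norm_nonneg _) hm
  have := (norm_add_le_max _ _).trans_lt (max_lt (hsmall a n hlt) (hsmall b p hpF))
  rw [hsum, norm_one] at this
  exact lt_irrefl _ this

/-- Frobenius is injective on the residue field. Expanding `((u - 1) + 1) ^ p ^ a` inside the
valuation ring, all cross terms are divisible by `p`. -/
lemma norm_sub_one_lt_one_of_norm_pow_sub_one_lt_one {p : ℕ} (hp : p.Prime)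
    (hpF : ‖(p : F)‖ < 1) {u : F} (hu : ‖u‖ ≤ 1) {a : ℕ} (h : ‖u ^ p ^ a - 1‖ < 1) :
    ‖u - 1‖ < 1 := by
  let 𝒪 := (NormedField.valuation (K := F)).integer
  have mem_𝒪 : ∀ z : F, z ∈ 𝒪 ↔ ‖z‖ ≤ 1 := fun z => by
    rw [Valuation.mem_integer_iff, NormedField.valuation_apply, ← NNReal.coe_le_coe]; rfl
  have hu1 : ‖u - 1‖ ≤ 1 := (norm_sub_le_max u 1).trans (by simp [hu])
  obtain ⟨r, hr⟩ := exists_add_pow_prime_pow_eq hp (⟨u - 1, (mem_𝒪 _).2 hu1⟩ : 𝒪) 1 a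
  have key : (u - 1) ^ p ^ a = (u ^ p ^ a - 1) - p * (u - 1) * r := by
    have := congrArg Subtype.val hr
    push_cast at this
    rw [sub_add_cancel] at this
    rw [this]; ring
  have hcorr : ‖(p : F) * (u - 1) * r‖ < 1 := by
    rw [norm_mul, norm_mul]
    exact mul_lt_one_of_nonneg_of_lt_one_left (by positivity)
      (mul_lt_one_of_nonneg_of_lt_one_left (norm_nonneg _) hpF hu1) ((mem_𝒪 r).1 r.2)
  have : ‖u - 1‖ ^ p ^ a < 1 := by
    rw [← norm_pow, key]
    exact (norm_sub_le_max _ _).trans_lt (max_lt h hcorr)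
  exact (pow_lt_one_iff_of_nonneg (norm_nonneg _) (pow_pos hp.pos a).ne').mp this

def closedBallOneSubmonoid {c : ℝ} (hc₀ : 0 ≤ c) (hc₁ : c ≤ 1) : Submonoid F where
  carrier := closedBall 1 c
  one_mem' := mem_closedBall_self hc₀
  mul_mem' := by
    intro y z hy hz
    rw [mem_closedBall, dist_eq_norm] at *
    have hy1 : ‖y‖ ≤ 1 := by
      simpa using (norm_add_le_max (y - 1) 1).trans (max_le (hy.trans hc₁) norm_one.le)
    calc ‖y * z - 1‖ = ‖y * (z - 1) + (y - 1)‖ := by ring_nf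
      _ ≤ max (‖y‖ * ‖z - 1‖) ‖y - 1‖ := by rw [← norm_mul]; exact norm_add_le_max _ _
      _ ≤ c := max_le (by nlinarith [norm_nonneg y, norm_nonneg (z - 1)]) hy

lemma norm_pow_sub_pow_sub_mul_sub_le {c : ℝ} (hc₀ : 0 ≤ c) (hc₁ : c ≤ 1) {y z : F}
    (hy : ‖y - 1‖ ≤ c) (hz : ‖z - 1‖ ≤ c) (n : ℕ) :
    ‖y ^ n - z ^ n - n * (y - z)‖ ≤ c * ‖y - z‖ := by
  let M := closedBallOneSubmonoid (F := F) hc₀ hc₁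
  have hM : ∀ w : F, w ∈ M ↔ ‖w - 1‖ ≤ c := fun w => by
    change w ∈ closedBall 1 c ↔ _; rw [mem_closedBall, dist_eq_norm]
  have hfactor : y ^ n - z ^ n - n * (y - z) =
      (∑ i ∈ Finset.range n, (y ^ i * z ^ (n - 1 - i) - 1)) * (y - z) := by
    rw [Finset.sum_sub_distrib, sub_mul, (Commute.all y z).geom_sum₂_mul]
    simp
  rw [hfactor, norm_mul]
  gcongr
  refine norm_sum_le_of_forall_le_of_nonneg hc₀ fun i _ => (hM _).1 ?_
  exact M.mul_mem (M.pow_mem ((hM y).2 hy) _) (M.pow_mem ((hM z).2 hz) _)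

lemma exists_pow_eq_of_norm_sub_one_lt_one [CompleteSpace F] {n : ℕ} (hn : ‖(n : F)‖ = 1)
    {x : F} (hx : ‖x - 1‖ < 1) : ∃ y : F, ‖y - 1‖ ≤ ‖x - 1‖ ∧ y ^ n = x := by
  set c := ‖x - 1‖ with hc
  have hc₀ : 0 ≤ c := norm_nonneg _
  let T : F → F := fun y => y - (y ^ n - x) / n
  have hdist : ∀ y ∈ closedBall 1 c, ∀ z ∈ closedBall 1 c, dist (T y) (T z) ≤ c * dist y z := by
    intro y hy z hz
    rw [mem_closedBall, dist_eq_norm] at hy hz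
    have : T y - T z = -((y ^ n - z ^ n - n * (y - z)) / n) := by
      have : (n : F) ≠ 0 := norm_ne_zero_iff.mp (by rw [hn]; exact one_ne_zero)
      simp only [T]; field_simp; ring
    rw [dist_eq_norm, dist_eq_norm, this, norm_neg, norm_div, hn, div_one]
    exact norm_pow_sub_pow_sub_mul_sub_le hc₀ hx.le hy hz n
  have hmaps : Set.MapsTo T (closedBall 1 c) (closedBall 1 c) := by
    intro y hy
    have hT1 : dist (T 1) 1 = c := by simp [T, hn, norm_sub_rev, hc]
    calc dist (T y) 1 ≤ max (dist (T y) (T 1)) (dist (T 1) 1) := IsUltrametricDist.dist_triangle_max _ _ _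
      _ ≤ c := max_le ((hdist y hy 1 (mem_closedBall_self hc₀)).trans
          (mul_le_of_le_one_right hc₀ (hy.trans hx.le))) hT1.le
  have hcontr : ContractingWith ‖x - 1‖₊ (hmaps.restrict T _ _) :=
    ⟨hx, LipschitzWith.of_dist_le_mul fun y z => hdist y y.2 z z.2⟩
  obtain ⟨y, hy, hfix, -⟩ := hcontr.exists_fixedPoint' isClosed_closedBall.isComplete hmaps
    (mem_closedBall_self hc₀) (edist_ne_top _ _)
  refine ⟨y, by rwa [mem_closedBall, dist_eq_norm] at hy, ?_⟩
  have : (y ^ n - x) / n = 0 := by simpa [T] using hfix.eq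
  rcases div_eq_zero_iff.mp this with h | h
  · exact sub_eq_zero.mp h
  · simp [h] at hn

variable (F) in
/-- `1 + 𝔭_F` as a subgroup of `𝔬_F× = sphere 0 1`. -/
def principalUnits : Subgroup (sphere (0 : F) 1) where
  carrier := {u | ‖(u : F) - 1‖ < 1}
  one_mem' := by simp
  mul_mem' := by
    intro u v (hu : ‖(u : F) - 1‖ < 1) (hv : ‖(v : F) - 1‖ < 1)
    show ‖(u : F) * v - 1‖ < 1
    calc ‖(u : F) * v - 1‖ = ‖(u : F) * (v - 1) + (u - 1)‖ := by ring_nf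
      _ < 1 := (norm_add_le_max _ _).trans_lt (max_lt (by simpa [norm_mul] using hv) hu)
  inv_mem' := by
    intro u (hu : ‖(u : F) - 1‖ < 1)
    show ‖(u : F)⁻¹ - 1‖ < 1
    have hu₀ : (u : F) ≠ 0 := ne_zero_of_mem_unit_sphere u
    calc ‖(u : F)⁻¹ - 1‖ = ‖(u : F)⁻¹‖ * ‖1 - (u : F)‖ := by
          rw [← norm_mul, mul_sub, mul_one, inv_mul_cancel₀ hu₀]
      _ < 1 := by simpa [norm_sub_rev] using hu

@[simp]
lemma mem_principalUnits {u : sphere (0 : F) 1} : u ∈ principalUnits F ↔ ‖(u : F) - 1‖ < 1 :=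
  Iff.rfl

lemma isOpen_principalUnits : IsOpen (principalUnits F : Set (sphere (0 : F) 1)) :=
  isOpen_lt (continuous_subtype_val.sub continuous_const).norm continuous_const

end NormedField

section Proper

variable {F : Type*} [NormedField F] [IsUltrametricDist F] [ProperSpace F]

variable (F) in
/-- The value group is discrete at `1`: the open unit ball is compact and is the increasing
union of the open sets `closedBall 0 r`, `r < 1`, so it is one of them. -/
lemma exists_lt_one_forall_norm_le_of_norm_lt_one :
    ∃ r < 1, ∀ z : F, ‖z‖ < 1 → ‖z‖ ≤ r := by
  have hcompact : IsCompact (ball (0 : F) 1) :=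
    (isCompact_closedBall 0 1).of_isClosed_subset (isClosed_ball 0 1) ball_subset_closedBall
  have : Nonempty (Set.Ioo (0 : ℝ) 1) := ⟨⟨1 / 2, by norm_num, by norm_num⟩⟩
  obtain ⟨r, hr⟩ := hcompact.elim_directed_cover (fun r : Set.Ioo (0 : ℝ) 1 => closedBall (0 : F) r)
    (fun r => isOpen_closedBall 0 r.2.1.ne')
    (fun z hz => Set.mem_iUnion.2 ⟨⟨max ‖z‖ (1 / 2), by positivity,
      max_lt (mem_ball_zero_iff.1 hz) (by norm_num)⟩, by simp⟩)
    (Monotone.directed_le fun r s hrs => closedBall_subset_closedBall hrs)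
  exact ⟨r, r.2.2, fun z hz => mem_closedBall_zero_iff.1 (hr (mem_ball_zero_iff.2 hz))⟩

lemma eventually_pow_ne_of_norm_lt_one {x : F} (hx₀ : x ≠ 0) (hx₁ : ‖x‖ < 1) :
    ∀ᶠ n in atTop, ∀ y : F, y ^ n ≠ x := by
  obtain ⟨r, hr₁, hr⟩ := exists_lt_one_forall_norm_le_of_norm_lt_one F
  have hr₀ : 0 ≤ r := by simpa using hr 0 (by simp)
  filter_upwards [eventually_ne_atTop 0, (tendsto_pow_atTop_nhds_zero_of_lt_one hr₀ hr₁).eventually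
    (gt_mem_nhds (norm_pos_iff.2 hx₀))] with n hn hrn y hy
  have hyn : ‖y‖ ^ n = ‖x‖ := by rw [← norm_pow, hy]
  have hy₁ : ‖y‖ < 1 := (pow_lt_one_iff_of_nonneg (norm_nonneg y) hn).1 (hyn ▸ hx₁)
  have := pow_le_pow_left₀ (norm_nonneg y) (hr y hy₁) n
  linarith

lemma eventually_pow_ne_of_norm_ne_one {x : F} (hx₀ : x ≠ 0) (hx₁ : ‖x‖ ≠ 1) :
    ∀ᶠ n in atTop, ∀ y : F, y ^ n ≠ x := by
  rcases hx₁.lt_or_gt with hlt | hgt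
  · exact eventually_pow_ne_of_norm_lt_one hx₀ hlt
  · filter_upwards [eventually_pow_ne_of_norm_lt_one (inv_ne_zero hx₀)
      (by rw [norm_inv]; exact inv_lt_one_of_one_lt₀ hgt)] with n hn y hy
    exact hn y⁻¹ (by rw [inv_pow, hy])

instance : (principalUnits F).FiniteIndex :=
  have : CompactSpace (sphere (0 : F) 1) := isCompact_iff_compactSpace.1 (isCompact_sphere 0 1)
  have := Subgroup.quotient_finite_of_isOpen _ (isOpen_principalUnits (F := F))
  Subgroup.finiteIndex_of_finite_quotient

lemma exists_not_dvd_forall_norm_pow_sub_one_lt_one {p : ℕ} (hp : p.Prime) (hpF : ‖(p : F)‖ < 1) :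
    ∃ n : ℕ, 0 < n ∧ ¬ p ∣ n ∧ ∀ u : F, ‖u‖ = 1 → ‖u ^ n - 1‖ < 1 := by
  set N := (principalUnits F).index
  have hN : N ≠ 0 := Subgroup.FiniteIndex.index_ne_zero
  refine ⟨ordCompl[p] N, Nat.ordCompl_pos p hN, Nat.not_dvd_ordCompl hp hN, fun u hu => ?_⟩
  have hpow : ‖(u ^ ordCompl[p] N) ^ p ^ N.factorization p - 1‖ < 1 := by
    rw [← pow_mul, mul_comm, Nat.ordProj_mul_ordCompl_eq_self]
    simpa using (principalUnits F).pow_index_mem ⟨u, mem_sphere_zero_iff_norm.2 hu⟩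
  exact norm_sub_one_lt_one_of_norm_pow_sub_one_lt_one hp hpF (by simp [hu]) hpow

end Proper

/-- For a non-archimedean local field `F` (here: a nontrivially normed,
ultrametric, locally compact field) of residual characteristic `p`
(the unique prime with `‖(p : F)‖ < 1`), an element `x ∈ F×` lies in
`1 + 𝔭_F` iff it admits an `n`-th root for every positive integer `n` not
divisible by `p`. -/
theorem stmt_15 {F : Type*} [NontriviallyNormedField F] [IsUltrametricDist F]
    [LocallyCompactSpace F] (p : ℕ) (hp : p.Prime) (hpF : ‖(p : F)‖ < 1)
    (x : F) (hx : x ≠ 0) :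
    ‖x - 1‖ < 1 ↔ ∀ n : ℕ, 0 < n → ¬ (p ∣ n) → ∃ y : F, y ≠ 0 ∧ y ^ n = x := by
  have : ProperSpace F := .of_locallyCompactSpace F
  constructor
  · intro hx₁ n _ hpn
    obtain ⟨y, hy, rfl⟩ :=
      exists_pow_eq_of_norm_sub_one_lt_one (norm_natCast_eq_one_of_not_dvd hp hpF hpn) hx₁
    refine ⟨y, ?_, rfl⟩
    rintro rfl
    simp only [zero_sub, norm_neg, norm_one] at hy
    linarith
  · intro hroots
    have hnorm : ‖x‖ = 1 := by
      by_contra hne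
      obtain ⟨n, hpn, hn₀, hn⟩ := ((Nat.frequently_atTop_not_dvd hp.ne_one).and_eventually
        ((eventually_gt_atTop 0).and (eventually_pow_ne_of_norm_ne_one hx hne))).exists
      obtain ⟨y, -, hy⟩ := hroots n hn₀ hpn
      exact hn y hy
    obtain ⟨n, hn₀, hpn, hn⟩ := exists_not_dvd_forall_norm_pow_sub_one_lt_one (F := F) hp hpF
    obtain ⟨y, -, rfl⟩ := hroots n hn₀ hpn
    exact hn y (by rwa [norm_pow, pow_eq_one_iff_of_nonneg (norm_nonneg _) hn₀.ne'] at hnorm)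
end

section
/- Let G be a locally compact group containing a compact subgroup of maximal (finite, positive) Haar volume. Then every continuous automorphism of G preserves the Haar measure: if μ_G ∘ γ = c_γ μ_G for a continuous automorphism γ, then c_γ = 1. -/
open MeasureTheory

/-! A continuous automorphism `γ` maps compact subgroups to compact subgroups, so maximality of
`K` gives both `c * μ K = μ (γ '' K) ≤ μ K` and, applied to `γ⁻¹`,
`μ K = c * μ (γ⁻¹ '' K) ≤ c * μ K`; since `0 < μ K < ∞`, this forces `c = 1`. -/

theorem Subgroup.measure_image_le_of_forall_isCompact_measure_le {G : Type*} [Group G]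
    [TopologicalSpace G] [MeasurableSpace G] (μ : Measure G) {K : Subgroup G}
    (hKc : IsCompact (K : Set G))
    (hKmax : ∀ K' : Subgroup G, IsCompact (K' : Set G) → μ K' ≤ μ K)
    (f : G →* G) (hf : Continuous f) :
    μ (f '' K) ≤ μ K :=
  hKmax (K.map f) (hKc.image hf)

theorem stmt_16_general {G : Type*} [Group G] [TopologicalSpace G]
    [MeasurableSpace G]
    (μ : Measure G)
    (K : Subgroup G) (hKc : IsCompact (K : Set G))
    (hKpos : 0 < μ (K : Set G)) (hKfin : μ (K : Set G) < ⊤)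
    (hKmax : ∀ K' : Subgroup G, IsCompact ((K' : Set G)) → μ (K' : Set G) ≤ μ (K : Set G))
    (γ : G ≃* G) (hγ : Continuous γ) (hγ' : Continuous γ.symm)
    (c : ENNReal) (hc : ∀ S : Set G, μ (γ '' S) = c * μ S) :
    c = 1 := by
  have hle : c * μ K ≤ μ K := hc K ▸
    Subgroup.measure_image_le_of_forall_isCompact_measure_le μ hKc hKmax γ.toMonoidHom hγ
  have hge : μ K ≤ c * μ K :=
    calc μ K = μ (γ '' (γ.symm '' K)) := congrArg μ (γ.toEquiv.image_symm_image _).symm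
      _ = c * μ (γ.symm '' K) := hc _
      _ ≤ c * μ K := mul_le_mul_right
        (Subgroup.measure_image_le_of_forall_isCompact_measure_le μ hKc hKmax
          γ.symm.toMonoidHom hγ') c
  exact le_antisymm
    ((ENNReal.mul_le_mul_iff_left hKpos.ne' hKfin.ne).1 (by rwa [one_mul]))
    ((ENNReal.mul_le_mul_iff_left hKpos.ne' hKfin.ne).1 (by rwa [one_mul]))

/-- Let `G` be a locally compact group with Haar measure `μ` containing a
compact subgroup `K` of maximal (finite, positive) Haar volume.  Then every
continuous automorphism of `G` preserves the Haar measure: if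
`μ (γ '' S) = c * μ S` for all `S`, then `c = 1`. -/
theorem stmt_16 {G : Type*} [Group G] [TopologicalSpace G] [IsTopologicalGroup G]
    [LocallyCompactSpace G] [MeasurableSpace G] [BorelSpace G]
    (μ : Measure G) [μ.IsHaarMeasure]
    (K : Subgroup G) (hKc : IsCompact (K : Set G))
    (hKpos : 0 < μ (K : Set G)) (hKfin : μ (K : Set G) < ⊤)
    (hKmax : ∀ K' : Subgroup G, IsCompact ((K' : Set G)) → μ (K' : Set G) ≤ μ (K : Set G))
    (γ : G ≃* G) (hγ : Continuous γ) (hγ' : Continuous γ.symm)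
    (c : ENNReal) (hc : ∀ S : Set G, μ (γ '' S) = c * μ S) :
    c = 1 :=
  stmt_16_general μ K hKc hKpos hKfin hKmax γ hγ hγ' c hc
end
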